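/- arXiv:1811.12057 — 2 statements merged into one kernel-verified Lean document; each statement's English description precedes it below -/
import Mathlib

section
/- Let κ ≥ 0 and λ = (λ1, λ2) ∈ ℝ² with 1 − κ λ2 ≠ 0, and let y : [0,1] → ℝ be four times continuously differentiable satisfying the two end conditions y''(1)(1−κλ2) + κλ1 y(1) = 0 and y'''(1)(1−κλ2) + (κλ1+λ2) y'(1) = 0. Then for every t ∈ [0,1], I₂(L⁴(λ)y)(t) = L²(λ)y(t), where L²(λ)y(t) = y''(t) − (λ1/(1−κλ2))(I₂y(t) − κ y(t)) − (λ2/(1−κλ2)) I₁y'(t) and L⁴(λ)y(t) = y⁗(t) + ((κλ1+λ2)/(1−κλ2)) y''(t) − (λ1/(1−κλ2)) y(t). -/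
/-!
`I₂ = I₁ ∘ I₁` is linear on continuous functions, and by the fundamental theorem of calculus
`I₂ f'' (t) = f'(1)(1 - t) - f(1) + f(t)`. Applying this to `y⁗` and `y''` turns `I₂(L⁴(λ)y)`
into `L²(λ)y` up to the terms `(y'''(1) + (κλ₁+λ₂)/(1-κλ₂) · y'(1))(1 - t)` and
`-(y''(1) + κλ₁/(1-κλ₂) · y(1))`, which vanish by the two end conditions.
-/

open Set

/-- `I₁ z (t) = ∫_t^1 z(τ) dτ`. -/
noncomputable def I1 (z : ℝ → ℝ) (t : ℝ) : ℝ := ∫ τ in t..(1:ℝ), z τ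

/-- `I₂ z (t) = ∫_t^1 ∫_τ^1 z(η) dη dτ`. -/
noncomputable def I2 (z : ℝ → ℝ) (t : ℝ) : ℝ :=
  ∫ τ in t..(1:ℝ), ∫ η in τ..(1:ℝ), z η

/-- The linearized second-order integro-differential operator `L²(λ)`. -/
noncomputable def L2 (κ l1 l2 : ℝ) (y : ℝ → ℝ) (t : ℝ) : ℝ :=
  deriv (deriv y) t - l1 / (1 - κ * l2) * (I2 y t - κ * y t)
    - l2 / (1 - κ * l2) * I1 (deriv y) t

/-- The linearized fourth-order differential operator `L⁴(λ)`. -/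
noncomputable def L4 (κ l1 l2 : ℝ) (y : ℝ → ℝ) (t : ℝ) : ℝ :=
  deriv (deriv (deriv (deriv y))) t
    + (κ * l1 + l2) / (1 - κ * l2) * deriv (deriv y) t
    - l1 / (1 - κ * l2) * y t

lemma continuous_I1 {z : ℝ → ℝ} (hz : Continuous z) : Continuous (I1 z) := by
  have h : I1 z = fun t => -∫ x in (1:ℝ)..t, z x :=
    funext fun t => intervalIntegral.integral_symm 1 t
  rw [h]
  exact (intervalIntegral.continuous_primitive hz.intervalIntegrable 1).neg

lemma I2_eq_I1_I1 (z : ℝ → ℝ) : I2 z = I1 (I1 z) := rfl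

lemma I1_add_mul_sub_mul {u v w : ℝ → ℝ} (hu : Continuous u) (hv : Continuous v)
    (hw : Continuous w) (a b : ℝ) :
    I1 (fun t => u t + a * v t - b * w t) = fun t => I1 u t + a * I1 v t - b * I1 w t := by
  funext t
  simp only [I1]
  rw [intervalIntegral.integral_sub
      ((hu.fun_add (continuous_const.fun_mul hv)).intervalIntegrable _ _)
      ((continuous_const.fun_mul hw).intervalIntegrable _ _),
    intervalIntegral.integral_add (hu.intervalIntegrable _ _)
      ((continuous_const.fun_mul hv).intervalIntegrable _ _),
    intervalIntegral.integral_const_mul, intervalIntegral.integral_const_mul]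

lemma I2_add_mul_sub_mul {u v w : ℝ → ℝ} (hu : Continuous u) (hv : Continuous v)
    (hw : Continuous w) (a b t : ℝ) :
    I2 (fun s => u s + a * v s - b * w s) t = I2 u t + a * I2 v t - b * I2 w t := by
  simp only [I2_eq_I1_I1]
  rw [I1_add_mul_sub_mul hu hv hw,
    I1_add_mul_sub_mul (continuous_I1 hu) (continuous_I1 hv) (continuous_I1 hw)]

lemma I1_deriv {f : ℝ → ℝ} (hf : ContDiff ℝ 1 f) : I1 (deriv f) = fun t => f 1 - f t := by
  funext t
  exact intervalIntegral.integral_deriv_eq_sub (fun x _ => hf.differentiable one_ne_zero x)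
    ((hf.continuous_deriv le_rfl).intervalIntegrable _ _)

lemma I2_deriv_deriv {f : ℝ → ℝ} (hf : ContDiff ℝ 2 f) (t : ℝ) :
    I2 (deriv (deriv f)) t = deriv f 1 * (1 - t) - (f 1 - f t) := by
  have hf' : ContDiff ℝ 1 (deriv f) := hf.deriv'
  have hI1f' : I1 (fun τ => deriv f 1 - deriv f τ) t = deriv f 1 * (1 - t) - I1 (deriv f) t := by
    rw [I1, intervalIntegral.integral_sub intervalIntegrable_const
      (hf'.continuous.intervalIntegrable _ _), intervalIntegral.integral_const, smul_eq_mul, I1]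
    ring
  rw [I2_eq_I1_I1, I1_deriv hf', hI1f', I1_deriv (hf.of_le one_le_two)]

theorem stmt6_general (κ l1 l2 : ℝ) (hden : 1 - κ * l2 ≠ 0)
    (y : ℝ → ℝ) (hy : ContDiff ℝ 4 y)
    (bc3 : deriv (deriv y) 1 * (1 - κ * l2) + κ * l1 * y 1 = 0)
    (bc4 : deriv (deriv (deriv y)) 1 * (1 - κ * l2) + (κ * l1 + l2) * deriv y 1 = 0) :
    ∀ t ∈ Icc (0:ℝ) 1, I2 (L4 κ l1 l2 y) t = L2 κ l1 l2 y t := by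
  intro t _
  have hy'' : ContDiff ℝ 2 (deriv (deriv y)) := (hy.deriv' (n := 3)).deriv'
  have hy4 : Continuous (deriv (deriv (deriv (deriv y)))) :=
    (hy''.deriv' (n := 1)).continuous_deriv le_rfl
  unfold L4
  rw [I2_add_mul_sub_mul hy4 hy''.continuous hy.continuous, I2_deriv_deriv hy'',
    I2_deriv_deriv (hy.of_le (by norm_num)), L2, I1_deriv (hy.of_le (by norm_num))]
  field_simp
  linear_combination (1 - t) * bc4 - bc3

/-- under the end conditions at `t = 1`, `I₂(L⁴(λ)y) = L²(λ)y` on `[0,1]`. -/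
theorem stmt6 (κ l1 l2 : ℝ) (hκ : 0 ≤ κ) (hden : 1 - κ * l2 ≠ 0)
    (y : ℝ → ℝ) (hy : ContDiff ℝ 4 y)
    (bc3 : deriv (deriv y) 1 * (1 - κ * l2) + κ * l1 * y 1 = 0)
    (bc4 : deriv (deriv (deriv y)) 1 * (1 - κ * l2) + (κ * l1 + l2) * deriv y 1 = 0) :
    ∀ t ∈ Icc (0:ℝ) 1, I2 (L4 κ l1 l2 y) t = L2 κ l1 l2 y t :=
  stmt6_general κ l1 l2 hden y hy bc3 bc4
end

section
/- Let κ ≥ 0 and λ = (λ1, λ2) with λ1 > 0 and 1 − κ λ2 > 0. If there exists a four times continuously differentiable function y : [0,1] → ℝ, not identically zero, satisfying L⁴(λ)y(t) = 0 on [0,1] together with the boundary conditions y(0) = 0, y'(0) = 0, y''(1)(1−κλ2) + κλ1 y(1) = 0, and y'''(1)(1−κλ2) + (κλ1+λ2) y'(1) = 0, then f(λ1, λ2) = 0. -/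
/-!
With `M = 1 - κλ₂ > 0`, the equation `L⁴(λ)y = 0` reads `y'''' + a y'' - b y = 0` with
`a = (κλ₁ + λ₂)/M` and `b = λ₁/M > 0`; its characteristic roots are `±i r₁, ±r₂`, where
`r₁² - r₂² = a` and `r₁² r₂² = b`. Uniqueness for the equivalent first-order linear system shows
that a solution with `y(0) = y'(0) = 0` is `α u + β v` with `u = cosh(r₂t) - cos(r₁t)` and
`v = r₁ sinh(r₂t) - r₂ sin(r₁t)`, and `(α, β) ≠ 0` when `y ≢ 0`. The two conditions at `t = 1`
then form a homogeneous `2 × 2` system in `(α, β)`, so its determinant vanishes; after eliminating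
`λ₁, λ₂` in favour of `r₁, r₂` this determinant is exactly `f(λ₁, λ₂)`.
-/

open Set

/-- The frequency parameter `r1(λ1, λ2)`. -/
noncomputable def rr1 (κ l1 l2 : ℝ) : ℝ :=
  Real.sqrt (Real.sqrt (l1 / (1 - κ * l2) + ((κ * l1 + l2) / (2 * (1 - κ * l2))) ^ 2)
    + (κ * l1 + l2) / (2 * (1 - κ * l2)))

/-- The frequency parameter `r2(λ1, λ2)`. -/
noncomputable def rr2 (κ l1 l2 : ℝ) : ℝ :=
  Real.sqrt (Real.sqrt (l1 / (1 - κ * l2) + ((κ * l1 + l2) / (2 * (1 - κ * l2))) ^ 2)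
    - (κ * l1 + l2) / (2 * (1 - κ * l2)))

/-- The interaction-curve function `f(λ1, λ2)`. -/
noncomputable def fInt (κ l1 l2 : ℝ) : ℝ :=
  Real.sqrt (l1 / (1 - κ * l2)) *
    (2 * l1 + κ * l1 * (κ * l1 - l2)
      + (2 * l1 + l2 ^ 2 - κ * l1 * l2) * Real.cos (rr1 κ l1 l2) * Real.cosh (rr2 κ l1 l2)
      - Real.sqrt (l1 / (1 - κ * l2)) * (l2 - κ * (l1 - κ * l1 * l2 + l2 ^ 2)) *
          Real.sin (rr1 κ l1 l2) * Real.sinh (rr2 κ l1 l2))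

open Real

theorem sqrt_sqrt_add_sq_spec {b : ℝ} (hb : 0 < b) (c : ℝ) :
    0 < √(√(b + c ^ 2) + c) ∧ 0 < √(√(b + c ^ 2) - c) ∧
      √(√(b + c ^ 2) + c) ^ 2 - √(√(b + c ^ 2) - c) ^ 2 = 2 * c ∧
      √(√(b + c ^ 2) + c) ^ 2 * √(√(b + c ^ 2) - c) ^ 2 = b := by
  have hc : |c| < √(b + c ^ 2) := (lt_sqrt (abs_nonneg c)).2 (by rw [sq_abs]; linarith)
  have hplus : 0 < √(b + c ^ 2) + c := by linarith [neg_abs_le c]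
  have hminus : 0 < √(b + c ^ 2) - c := by linarith [le_abs_self c]
  have hs : √(b + c ^ 2) ^ 2 = b + c ^ 2 := sq_sqrt (by positivity)
  refine ⟨sqrt_pos.2 hplus, sqrt_pos.2 hminus, ?_, ?_⟩ <;>
    rw [sq_sqrt hplus.le, sq_sqrt hminus.le]
  · ring
  · linear_combination hs

theorem rr1_rr2_spec {κ l1 l2 : ℝ} (hl1 : 0 < l1) (hM : 0 < 1 - κ * l2) :
    0 < rr1 κ l1 l2 ∧ 0 < rr2 κ l1 l2 ∧
      rr1 κ l1 l2 ^ 2 - rr2 κ l1 l2 ^ 2 = (κ * l1 + l2) / (1 - κ * l2) ∧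
      rr1 κ l1 l2 ^ 2 * rr2 κ l1 l2 ^ 2 = l1 / (1 - κ * l2) := by
  obtain ⟨h1, h2, hdiff, hprod⟩ :=
    sqrt_sqrt_add_sq_spec (div_pos hl1 hM) ((κ * l1 + l2) / (2 * (1 - κ * l2)))
  refine ⟨h1, h2, ?_, hprod⟩
  rw [rr1, rr2, hdiff]
  field_simp

theorem deriv4_eq_of_L4_eq_zero {κ l1 l2 t : ℝ} {y : ℝ → ℝ} (h : L4 κ l1 l2 y t = 0) :
    deriv (deriv (deriv (deriv y))) t =
      l1 / (1 - κ * l2) * y t - (κ * l1 + l2) / (1 - κ * l2) * deriv (deriv y) t := by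
  rw [L4] at h
  linarith

noncomputable def trigHyp (p q a b c d : ℝ) (t : ℝ) : ℝ :=
  a * cos (p * t) + b * sin (p * t) + c * cosh (q * t) + d * sinh (q * t)

theorem hasDerivAt_trigHyp (p q a b c d t : ℝ) :
    HasDerivAt (trigHyp p q a b c d) (trigHyp p q (b * p) (-(a * p)) (d * q) (c * q) t) t := by
  have hp : HasDerivAt (p * ·) p t := by simpa using (hasDerivAt_id t).const_mul p
  have hq : HasDerivAt (q * ·) q t := by simpa using (hasDerivAt_id t).const_mul q
  refine ((((hp.cos.const_mul a).add (hp.sin.const_mul b)).add (hq.cosh.const_mul c)).add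
    (hq.sinh.const_mul d)).congr_deriv ?_
  simp only [trigHyp]
  ring

theorem deriv_trigHyp (p q a b c d : ℝ) :
    deriv (trigHyp p q a b c d) = trigHyp p q (b * p) (-(a * p)) (d * q) (c * q) :=
  funext fun t => (hasDerivAt_trigHyp p q a b c d t).deriv

theorem contDiff_trigHyp (p q a b c d : ℝ) {n : WithTop ℕ∞} :
    ContDiff ℝ n (trigHyp p q a b c d) := by
  unfold trigHyp
  fun_prop

theorem trigHyp_zero (p q a b c d : ℝ) : trigHyp p q a b c d 0 = a + c := by
  simp [trigHyp]

theorem deriv4_trigHyp (p q a b c d t : ℝ) :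
    deriv (deriv (deriv (deriv (trigHyp p q a b c d)))) t =
      p ^ 2 * q ^ 2 * trigHyp p q a b c d t -
        (p ^ 2 - q ^ 2) * deriv (deriv (trigHyp p q a b c d)) t := by
  simp only [deriv_trigHyp]
  simp only [trigHyp]
  ring

noncomputable def jet3 (g : ℝ → ℝ) (t : ℝ) : ℝ × ℝ × ℝ × ℝ :=
  (g t, deriv g t, deriv (deriv g) t, deriv (deriv (deriv g)) t)

theorem hasDerivAt_jet3 {g : ℝ → ℝ} (hg : ContDiff ℝ 4 g) (t : ℝ) :
    HasDerivAt (jet3 g) (jet3 (deriv g) t) t := by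
  obtain ⟨hd0, -, hg1⟩ := contDiff_succ_iff_deriv.1 (show ContDiff ℝ (3 + 1) g from hg)
  obtain ⟨hd1, -, hg2⟩ := contDiff_succ_iff_deriv.1 (show ContDiff ℝ (2 + 1) (deriv g) from hg1)
  obtain ⟨hd2, -, hg3⟩ := contDiff_succ_iff_deriv.1 (show ContDiff ℝ (1 + 1) _ from hg2)
  have hd3 := hg3.differentiable one_ne_zero
  exact (hd0 t).hasDerivAt.prodMk
    ((hd1 t).hasDerivAt.prodMk ((hd2 t).hasDerivAt.prodMk (hd3 t).hasDerivAt))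

noncomputable def companion (a b : ℝ) : (ℝ × ℝ × ℝ × ℝ) →L[ℝ] ℝ × ℝ × ℝ × ℝ :=
  LinearMap.toContinuousLinearMap
    { toFun := fun x => (x.2.1, x.2.2.1, x.2.2.2, b * x.1 - a * x.2.2.1)
      map_add' := fun x y => by
        simp only [Prod.fst_add, Prod.snd_add, Prod.mk_add_mk]
        ring_nf
      map_smul' := fun c x => by
        simp only [Prod.smul_fst, Prod.smul_snd, Prod.smul_mk, smul_eq_mul, RingHom.id_apply]
        ring_nf }

theorem eqOn_jet3_of_ode {a b t₀ t₁ : ℝ} {g h : ℝ → ℝ} (hg : ContDiff ℝ 4 g) (hh : ContDiff ℝ 4 h)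
    (hg' : ∀ t ∈ Icc t₀ t₁, deriv (deriv (deriv (deriv g))) t = b * g t - a * deriv (deriv g) t)
    (hh' : ∀ t ∈ Icc t₀ t₁, deriv (deriv (deriv (deriv h))) t = b * h t - a * deriv (deriv h) t)
    (h₀ : jet3 g t₀ = jet3 h t₀) : EqOn (jet3 g) (jet3 h) (Icc t₀ t₁) := by
  have solves {k : ℝ → ℝ} (hk : ContDiff ℝ 4 k)
      (hk' : ∀ t ∈ Icc t₀ t₁, deriv (deriv (deriv (deriv k))) t = b * k t - a * deriv (deriv k) t)
      (t : ℝ) (ht : t ∈ Ico t₀ t₁) :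
      HasDerivWithinAt (jet3 k) (companion a b (jet3 k t)) (Ici t) t := by
    have : companion a b (jet3 k t) = jet3 (deriv k) t := by
      simp [companion, jet3, hk' t (Ico_subset_Icc_self ht)]
    exact this ▸ (hasDerivAt_jet3 hk t).hasDerivWithinAt
  exact ODE_solution_unique (fun _ => (companion a b).lipschitz)
    (HasDerivAt.continuousOn fun t _ => hasDerivAt_jet3 hg t) (solves hg hg')
    (HasDerivAt.continuousOn fun t _ => hasDerivAt_jet3 hh t) (solves hh hh') h₀

theorem exists_eqOn_jet3_trigHyp {p q t₁ : ℝ} {y : ℝ → ℝ} (hp : 0 < p) (hq : 0 < q)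
    (hy : ContDiff ℝ 4 y)
    (hode : ∀ t ∈ Icc 0 t₁, deriv (deriv (deriv (deriv y))) t =
      p ^ 2 * q ^ 2 * y t - (p ^ 2 - q ^ 2) * deriv (deriv y) t)
    (hy0 : y 0 = 0) (hy'0 : deriv y 0 = 0) :
    ∃ α β : ℝ, EqOn (jet3 y) (jet3 (trigHyp p q (-α) (-(β * q)) α (β * p))) (Icc 0 t₁) := by
  -- the candidate has jet `(0, 0, α (p² + q²), β p q (p² + q²))` at `0`
  refine ⟨deriv (deriv y) 0 / (p ^ 2 + q ^ 2), deriv (deriv (deriv y)) 0 / (p * q * (p ^ 2 + q ^ 2)),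
    eqOn_jet3_of_ode hy (contDiff_trigHyp _ _ _ _ _ _) hode
      (fun t _ => deriv4_trigHyp _ _ _ _ _ _ t) ?_⟩
  simp only [jet3, deriv_trigHyp, trigHyp_zero, hy0, hy'0]
  ext <;> dsimp only <;> field_simp <;> ring

/-- The boundary conditions at `t = 1`, as functionals of the jet `(y, y', y'', y''')` at `1`. -/
noncomputable def bc₁ (κ l1 l2 : ℝ) (j : ℝ × ℝ × ℝ × ℝ) : ℝ :=
  j.2.2.1 * (1 - κ * l2) + κ * l1 * j.1

noncomputable def bc₂ (κ l1 l2 : ℝ) (j : ℝ × ℝ × ℝ × ℝ) : ℝ :=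
  j.2.2.2 * (1 - κ * l2) + (κ * l1 + l2) * j.2.1

theorem bc₁_jet3_trigHyp (κ l1 l2 p q α β t : ℝ) :
    bc₁ κ l1 l2 (jet3 (trigHyp p q (-α) (-(β * q)) α (β * p)) t) =
      α * bc₁ κ l1 l2 (jet3 (trigHyp p q (-1) 0 1 0) t) +
        β * bc₁ κ l1 l2 (jet3 (trigHyp p q 0 (-q) 0 p) t) := by
  simp only [bc₁, jet3, deriv_trigHyp]
  simp only [trigHyp]
  ring

theorem bc₂_jet3_trigHyp (κ l1 l2 p q α β t : ℝ) :
    bc₂ κ l1 l2 (jet3 (trigHyp p q (-α) (-(β * q)) α (β * p)) t) =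
      α * bc₂ κ l1 l2 (jet3 (trigHyp p q (-1) 0 1 0) t) +
        β * bc₂ κ l1 l2 (jet3 (trigHyp p q 0 (-q) 0 p) t) := by
  simp only [bc₂, jet3, deriv_trigHyp]
  simp only [trigHyp]
  ring

theorem det_eq_zero_of_ne_zero_solution {R : Type*} [CommRing R] [NoZeroDivisors R]
    {a b c d x y : R} (h₁ : x * a + y * b = 0) (h₂ : x * c + y * d = 0) (hxy : x ≠ 0 ∨ y ≠ 0) :
    a * d - b * c = 0 := by
  rcases hxy with hx | hy
  · exact (mul_eq_zero.1
      (by linear_combination d * h₁ - b * h₂ : x * (a * d - b * c) = 0)).resolve_left hx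
  · exact (mul_eq_zero.1
      (by linear_combination a * h₂ - c * h₁ : y * (a * d - b * c) = 0)).resolve_left hy

theorem fInt_eq_det {κ l1 l2 : ℝ} (hl1 : 0 < l1) (hM : 0 < 1 - κ * l2) :
    fInt κ l1 l2 =
      bc₁ κ l1 l2 (jet3 (trigHyp (rr1 κ l1 l2) (rr2 κ l1 l2) (-1) 0 1 0) 1) *
          bc₂ κ l1 l2 (jet3 (trigHyp (rr1 κ l1 l2) (rr2 κ l1 l2) 0 (-rr2 κ l1 l2) 0 (rr1 κ l1 l2)) 1) -
        bc₁ κ l1 l2 (jet3 (trigHyp (rr1 κ l1 l2) (rr2 κ l1 l2) 0 (-rr2 κ l1 l2) 0 (rr1 κ l1 l2)) 1) *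
          bc₂ κ l1 l2 (jet3 (trigHyp (rr1 κ l1 l2) (rr2 κ l1 l2) (-1) 0 1 0) 1) := by
  obtain ⟨hr1, hr2, hdiff, hprod⟩ := rr1_rr2_spec hl1 hM
  unfold fInt
  simp only [bc₁, bc₂, jet3, deriv_trigHyp]
  simp only [trigHyp, mul_one]
  set r1 := rr1 κ l1 l2
  set r2 := rr2 κ l1 l2
  set M := 1 - κ * l2 with hMdef
  have hl1' : l1 = M * (r1 ^ 2 * r2 ^ 2) := by rw [hprod]; field_simp
  have hMA : M * (r1 ^ 2 - r2 ^ 2) = κ * l1 + l2 := by rw [hdiff]; field_simp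
  have hl2' : l2 = M * (r1 ^ 2 - r2 ^ 2) - κ * (M * (r1 ^ 2 * r2 ^ 2)) := by
    linear_combination -hMA - κ * hl1'
  have hE : M * (1 + κ * (r1 ^ 2 - r2 ^ 2) - κ ^ 2 * (r1 ^ 2 * r2 ^ 2)) = 1 := by
    linear_combination κ ^ 2 * hl1' + κ * hMA + hMdef
  have hsqrt : √(l1 / M) = r1 * r2 := by
    rw [← hprod, ← mul_pow, sqrt_sq (by positivity)]
  rw [hsqrt, hl1', hl2']
  linear_combination (-r1 ^ 2 * r2 ^ 4 * M * sin r1 * sinh r2 - 2 * r1 ^ 3 * r2 ^ 3 * M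
      - 2 * r1 ^ 3 * r2 ^ 3 * M * cos r1 * cosh r2 + r1 ^ 4 * r2 ^ 2 * M * sin r1 * sinh r2
      - 2 * r1 ^ 4 * r2 ^ 4 * κ * M * sin r1 * sinh r2) * hE
    + (-r1 ^ 3 * r2 ^ 3 * M ^ 2 + r1 ^ 3 * r2 ^ 5 * κ * M ^ 2) * sin_sq_add_cos_sq r1
    + (-r1 ^ 3 * r2 ^ 3 * M ^ 2 - r1 ^ 5 * r2 ^ 3 * κ * M ^ 2) * cosh_sq_sub_sinh_sq r2

theorem stmt11_general (κ l1 l2 : ℝ) (hl1 : 0 < l1) (hl2 : 0 < 1 - κ * l2)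
    (hex : ∃ y : ℝ → ℝ, ContDiff ℝ 4 y ∧
      (∃ t ∈ Icc (0:ℝ) 1, y t ≠ 0) ∧
      (∀ t ∈ Icc (0:ℝ) 1, L4 κ l1 l2 y t = 0) ∧
      y 0 = 0 ∧ deriv y 0 = 0 ∧
      deriv (deriv y) 1 * (1 - κ * l2) + κ * l1 * y 1 = 0 ∧
      deriv (deriv (deriv y)) 1 * (1 - κ * l2) + (κ * l1 + l2) * deriv y 1 = 0) :
    fInt κ l1 l2 = 0 := by
  obtain ⟨y, hy, ⟨t₀, ht₀, hyt₀⟩, hL, hy0, hy'0, hbc₁, hbc₂⟩ := hex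
  obtain ⟨hr1, hr2, hdiff, hprod⟩ := rr1_rr2_spec hl1 hl2
  obtain ⟨α, β, hjet⟩ := exists_eqOn_jet3_trigHyp hr1 hr2 hy
    (fun t ht => by rw [hprod, hdiff]; exact deriv4_eq_of_L4_eq_zero (hL t ht)) hy0 hy'0
  have hαβ : α ≠ 0 ∨ β ≠ 0 := by
    by_contra! h
    apply hyt₀
    simpa [jet3, trigHyp, h.1, h.2] using congrArg Prod.fst (hjet ht₀)
  have hone := hjet (right_mem_Icc.2 zero_le_one)
  have h₁ : bc₁ κ l1 l2 (jet3 y 1) = 0 := hbc₁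
  have h₂ : bc₂ κ l1 l2 (jet3 y 1) = 0 := hbc₂
  rw [hone, bc₁_jet3_trigHyp] at h₁
  rw [hone, bc₂_jet3_trigHyp] at h₂
  rw [fInt_eq_det hl1 hl2]
  exact det_eq_zero_of_ne_zero_solution h₁ h₂ hαβ

/-- existence of a nontrivial solution of the linearized fourth-order
boundary value problem forces the load parameters to lie on the interaction curve. -/
theorem stmt11 (κ l1 l2 : ℝ) (hκ : 0 ≤ κ) (hl1 : 0 < l1) (hl2 : 0 < 1 - κ * l2)
    (hex : ∃ y : ℝ → ℝ, ContDiff ℝ 4 y ∧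
      (∃ t ∈ Icc (0:ℝ) 1, y t ≠ 0) ∧
      (∀ t ∈ Icc (0:ℝ) 1, L4 κ l1 l2 y t = 0) ∧
      y 0 = 0 ∧ deriv y 0 = 0 ∧
      deriv (deriv y) 1 * (1 - κ * l2) + κ * l1 * y 1 = 0 ∧
      deriv (deriv (deriv y)) 1 * (1 - κ * l2) + (κ * l1 + l2) * deriv y 1 = 0) :
    fInt κ l1 l2 = 0 :=
  stmt11_general κ l1 l2 hl1 hl2 hex
end
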